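/- Gauss binomial evaluation at roots of unity: for ζ = exp(2πi/n) and 1 ≤ j ≤ d < n, the elementary symmetric polynomial satisfies E_j(tζ^{-(d-1)/2}, tζ^{-(d-1)/2+1}, ..., tζ^{(d-1)/2}) = t^j · ∏_{r=0}^{j-1} sin((d-r)π/n) / ∏_{r=1}^{j} sin(rπ/n). -/

import Mathlib

noncomputable section

/-- Elementary symmetric polynomial `E_k` in `d` variables. -/
def Epoly (d k : ℕ) (z : Fin d → ℂ) : ℂ :=
  ∑ s ∈ (Finset.univ : Finset (Fin d)).powersetCard k, ∏ i ∈ s, z i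

/-- The centered tuple `ζ^{I_0} = (ζ^{-(d-1)/2}, ζ^{-(d-1)/2+1}, …, ζ^{(d-1)/2})`,
with `ζ^m` interpreted as `exp(2πi·m/n)` for (half-)integers `m`. -/
def zI0 (d n : ℕ) : Fin d → ℂ := fun k =>
  Complex.exp (Real.pi * Complex.I * (2 * (k : ℂ) - ((d : ℂ) - 1)) / n)

/-!
With `w = e^{iπ/n}` the evaluation point is `t` times the multiset `w^{-(d-1)}, w^{-(d-3)}, …,
w^{d-1}`. Removing its top element `w^d` from the multiset for `d + 1` leaves `w⁻¹` times the one
for `d`, which gives a Pascal recursion for `e_j`; by induction on `d`,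
`∏_{r<j} (w^{r+1} - w^{-(r+1)}) · e_j = ∏_{r<j} (w^{d-r} - w^{-(d-r)})` in any field. Since
`w^m - w^{-m} = 2i sin(mπ/n)`, the factors `2i` cancel, and the denominator is nonzero because
`0 < r + 1 < n`.
-/

open Finset Complex

namespace Multiset

variable {R : Type*} [CommSemiring R]

theorem esymm_cons_succ (a : R) (s : Multiset R) (k : ℕ) :
    (a ::ₘ s).esymm (k + 1) = s.esymm (k + 1) + a * s.esymm k := by
  simp [esymm, map_map, sum_map_mul_left]

theorem esymm_map_mul_left (c : R) (s : Multiset R) (k : ℕ) :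
    (s.map (c * ·)).esymm k = c ^ k * s.esymm k := by
  simpa using (pow_smul_esymm c k s).symm

end Multiset

section GaussianBinomial

variable {K : Type*} [Field K]

/-- For `ζ = w²` the paper's `[m]_ζ` is `qIntNumerator w m / qIntNumerator w 1`. -/
def qIntNumerator (w : K) (m : ℤ) : K := w ^ m - w ^ (-m)

def centeredPowers (w : K) (d : ℕ) : Multiset K :=
  (Multiset.range d).map fun k : ℕ => w ^ (2 * (k : ℤ) + 1 - d)

theorem qIntNumerator_add {w : K} (hw : w ≠ 0) (a b : ℤ) :
    qIntNumerator w (a + b) = w ^ (-b) * qIntNumerator w a + w ^ a * qIntNumerator w b := by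
  simp only [qIntNumerator, mul_sub, ← zpow_add₀ hw]
  ring_nf

theorem centeredPowers_succ {w : K} (hw : w ≠ 0) (d : ℕ) :
    centeredPowers w (d + 1) = w ^ d ::ₘ (centeredPowers w d).map (w⁻¹ * ·) := by
  have top : w ^ (2 * (d : ℤ) + 1 - ((d + 1 : ℕ) : ℤ)) = w ^ d := by
    rw [← zpow_natCast]; congr 1; push_cast; ring
  have shifted (k : ℕ) : w ^ (2 * (k : ℤ) + 1 - ((d + 1 : ℕ) : ℤ)) =
      w⁻¹ * w ^ (2 * (k : ℤ) + 1 - d) := by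
    rw [← zpow_neg_one, ← zpow_add₀ hw]; congr 1; push_cast; ring
  rw [centeredPowers, centeredPowers, Multiset.range_succ, Multiset.map_cons, top]
  simp only [Multiset.map_map, Function.comp_def, shifted]

theorem prod_qIntNumerator_mul_esymm_centeredPowers {w : K} (hw : w ≠ 0) (d j : ℕ) :
    (∏ r ∈ range j, qIntNumerator w (r + 1)) * (centeredPowers w d).esymm j =
      ∏ r ∈ range j, qIntNumerator w (d - r) := by
  induction d generalizing j with
  | zero =>
    cases j with
    | zero => simp [Multiset.esymm]
    | succ j =>
      simp [centeredPowers, Multiset.esymm, Multiset.powersetCard_zero_right, prod_range_succ',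
        qIntNumerator]
  | succ d ih =>
    cases j with
    | zero => simp [Multiset.esymm]
    | succ j =>
      have shift : ∏ r ∈ range (j + 1), qIntNumerator w ((d + 1 : ℕ) - r) =
          qIntNumerator w (d + 1) * ∏ r ∈ range j, qIntNumerator w (d - r) := by
        rw [prod_range_succ', mul_comm]
        push_cast
        ring_nf
      have pascal := qIntNumerator_add hw (d - j) (j + 1)
      rw [show (d : ℤ) - j + (j + 1) = d + 1 by ring] at pascal
      have inv_pow : w⁻¹ ^ (j + 1) = w ^ (-(j + 1 : ℤ)) := by
        rw [← zpow_natCast, inv_zpow', Nat.cast_succ]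
      have shift_pow : w ^ d * w⁻¹ ^ j = w ^ ((d : ℤ) - j) := by
        rw [← zpow_natCast, ← zpow_natCast, inv_zpow', ← zpow_add₀ hw, sub_eq_add_neg]
      have ih_succ := ih (j + 1)
      rw [prod_range_succ, prod_range_succ] at ih_succ
      rw [shift, centeredPowers_succ hw, Multiset.esymm_cons_succ, Multiset.esymm_map_mul_left,
        Multiset.esymm_map_mul_left, prod_range_succ, inv_pow]
      linear_combination w ^ (-(j + 1 : ℤ)) * ih_succ +
        (w ^ (d : ℕ) * w⁻¹ ^ j * qIntNumerator w (j + 1)) * ih j +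
        (∏ r ∈ range j, qIntNumerator w (d - r)) *
          (qIntNumerator w (j + 1) * shift_pow - pascal)

end GaussianBinomial

theorem qIntNumerator_exp_mul_I (x : ℝ) (m : ℤ) :
    qIntNumerator (exp (x * I)) m = 2 * I * (Real.sin (m * x) : ℂ) := by
  rw [qIntNumerator, ← exp_int_mul, ← exp_int_mul, Int.cast_neg, neg_mul, ← mul_assoc,
    ← neg_mul, exp_mul_I, exp_mul_I, Complex.cos_neg, Complex.sin_neg, ofReal_sin]
  push_cast
  ring

theorem prod_qIntNumerator_exp_mul_I (x : ℝ) (j : ℕ) (f : ℕ → ℤ) :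
    ∏ r ∈ range j, qIntNumerator (exp (x * I)) (f r) =
      (2 * I) ^ j * ((∏ r ∈ range j, Real.sin (f r * x) : ℝ) : ℂ) := by
  simp [qIntNumerator_exp_mul_I, prod_mul_distrib]

theorem Epoly_eq_esymm (d k : ℕ) (z : Fin d → ℂ) : Epoly d k z = (univ.val.map z).esymm k :=
  (esymm_map_val z univ k).symm

theorem Epoly_mul_left (d k : ℕ) (c : ℂ) (z : Fin d → ℂ) :
    Epoly d k (fun i => c * z i) = c ^ k * Epoly d k z := by
  rw [Epoly_eq_esymm, Epoly_eq_esymm, ← Multiset.esymm_map_mul_left, Multiset.map_map]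
  rfl

theorem univ_val_map_zI0 (d n : ℕ) :
    univ.val.map (zI0 d n) = centeredPowers (exp ((Real.pi / n : ℝ) * I)) d := by
  have hzI0 : zI0 d n =
      (fun k : ℕ => exp ((Real.pi / n : ℝ) * I) ^ (2 * (k : ℤ) + 1 - d)) ∘ Fin.val :=
    funext fun k => by
      rw [zI0, Function.comp_apply, ← exp_int_mul]
      congr 1
      push_cast
      ring
  rw [hzI0, ← Multiset.map_map, Fin.univ_val_map, List.ofFn_eq_map,
    List.map_coe_finRange_eq_range]
  rfl

theorem sin_nat_mul_pi_div_pos {m n : ℕ} (hm : 0 < m) (hmn : m < n) :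
    0 < Real.sin (m * Real.pi / n) := by
  have hn : (0 : ℝ) < n := by exact_mod_cast hm.trans hmn
  refine Real.sin_pos_of_pos_of_lt_pi (by positivity) ?_
  rw [div_lt_iff₀ hn, mul_comm]
  exact mul_lt_mul_of_pos_left (by exact_mod_cast hmn) Real.pi_pos

theorem stmt15_general (d n j : ℕ) (hjd : j ≤ d) (hdn : d < n) (t : ℂ) :
    Epoly d j (fun k => t * zI0 d n k) =
      t ^ j *
        (((∏ r ∈ Finset.range j, Real.sin (((d : ℝ) - r) * Real.pi / n)) /
            ∏ r ∈ Finset.range j, Real.sin ((r + 1) * Real.pi / n) : ℝ) : ℂ) := by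
  have hden : ((∏ r ∈ range j, Real.sin ((r + 1) * Real.pi / n) : ℝ) : ℂ) ≠ 0 :=
    ofReal_ne_zero.2 <| prod_ne_zero_iff.2 fun r hr => by
      have := sin_nat_mul_pi_div_pos (n := n) r.succ_pos (by grind)
      exact_mod_cast this.ne'
  have gauss :=
    prod_qIntNumerator_mul_esymm_centeredPowers (exp_ne_zero ((Real.pi / n : ℝ) * I)) d j
  rw [prod_qIntNumerator_exp_mul_I, prod_qIntNumerator_exp_mul_I] at gauss
  simp only [Int.cast_sub, Int.cast_natCast, Int.cast_add, Int.cast_one, ← mul_div_assoc] at gauss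
  rw [Epoly_mul_left, Epoly_eq_esymm, univ_val_map_zI0]
  congr 1
  apply mul_left_cancel₀ (mul_ne_zero (pow_ne_zero j (mul_ne_zero two_ne_zero I_ne_zero)) hden)
  rw [gauss, ofReal_div, mul_assoc, mul_div_cancel₀ _ hden]

/-- Gauss binomial evaluation: for `1 ≤ j ≤ d < n`,
`E_j(tζ^{-(d-1)/2},…,tζ^{(d-1)/2}) = t^j · ∏_{r=0}^{j-1} sin((d-r)π/n) / ∏_{r=1}^{j} sin(rπ/n)`. -/
theorem stmt15 (d n j : ℕ) (hj : 1 ≤ j) (hjd : j ≤ d) (hdn : d < n) (t : ℂ) :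
    Epoly d j (fun k => t * zI0 d n k) =
      t ^ j *
        (((∏ r ∈ Finset.range j, Real.sin (((d : ℝ) - r) * Real.pi / n)) /
            ∏ r ∈ Finset.range j, Real.sin ((r + 1) * Real.pi / n) : ℝ) : ℂ) :=
  stmt15_general d n j hjd hdn t
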